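/- arXiv:math/0601530 — 7 statements merged into one kernel-verified Lean document; each statement's English description precedes it below -/
import Mathlib

section
/- Let f : ℝⁿ → ℝ ∪ {+∞}, let x ∈ dom f and let x* be a Fréchet subgradient of f at x. Let c : ℝ → ℝⁿ be differentiable at 0 with c(0) = x and c(t) ∈ dom f for all t in a neighborhood of 0, and suppose the (real-valued near 0) function t ↦ f(c(t)) is differentiable at 0. Then d/dt f(c(t))|_{t=0} = ⟨x*, c'(0)⟩. -/
/-!
Along the curve, the Fréchet inequality gives `g t ≥ g 0 + ⟪x*, c t - x⟫ - o(|t|)`, since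
`‖c t - x‖ = O(|t|)`. Hence `φ t = g t - ⟪x*, c t⟫` is differentiable at `0` and bounded below by
`φ 0 - ε|t|` for every `ε > 0`; its right and left difference quotients then give
`-ε ≤ φ' 0 ≤ ε`.
-/

open Filter Topology

/-- The Fréchet subdifferential of an extended-real-valued function
`f : ℝⁿ → ℝ ∪ {+∞}` (modelled as `EReal`-valued, with no `⊥` values) at `x`:
the set of `x*` with `liminf_{y → x, y ≠ x} (f y - f x - ⟨x*, y-x⟩)/‖y-x‖ ≥ 0`.
It is empty off the domain `{x | f x ≠ ⊤}`. -/
noncomputable def FrechetSubdiff {n : ℕ} (f : EuclideanSpace ℝ (Fin n) → EReal)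
    (x : EuclideanSpace ℝ (Fin n)) : Set (EuclideanSpace ℝ (Fin n)) :=
  {xs | f x ≠ ⊤ ∧ f x ≠ ⊥ ∧
    0 ≤ Filter.liminf
      (fun y => (f y - f x - ((inner ℝ xs (y - x) : ℝ) : EReal)) * ((‖y - x‖⁻¹ : ℝ) : EReal))
      (𝓝[≠] x)}

theorem eq_zero_of_hasDerivAt_of_forall_eventually_ge {φ : ℝ → ℝ} {L a : ℝ}
    (hφ : HasDerivAt φ L a) (h : ∀ ε > 0, ∀ᶠ t in 𝓝 a, φ a - ε * |t - a| ≤ φ t) : L = 0 := by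
  have hslope := hasDerivAt_iff_tendsto_slope.mp hφ
  have hbound : ∀ ε > 0, -ε ≤ L ∧ L ≤ ε := by
    intro ε hε
    constructor
    · refine ge_of_tendsto (hslope.mono_left (nhdsGT_le_nhdsNE a)) ?_
      filter_upwards [eventually_nhdsWithin_of_eventually_nhds (h ε hε), self_mem_nhdsWithin]
        with t ht (hat : a < t)
      rw [slope_def_field, le_div_iff₀ (sub_pos.mpr hat)]
      rw [abs_of_pos (sub_pos.mpr hat)] at ht
      linarith
    · refine le_of_tendsto (hslope.mono_left (nhdsLT_le_nhdsNE a)) ?_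
      filter_upwards [eventually_nhdsWithin_of_eventually_nhds (h ε hε), self_mem_nhdsWithin]
        with t ht (hta : t < a)
      rw [slope_def_field, div_le_iff_of_neg (sub_neg.mpr hta)]
      rw [abs_of_neg (sub_neg.mpr hta)] at ht
      linarith
  exact abs_nonpos_iff.mp <| le_of_forall_pos_le_add fun ε hε => by
    simpa using abs_le.mpr (hbound ε hε)

theorem FrechetSubdiff.eventually_le {n : ℕ} {f : EuclideanSpace ℝ (Fin n) → EReal}
    {x xs : EuclideanSpace ℝ (Fin n)} (hxs : xs ∈ FrechetSubdiff f x) {ε : ℝ} (hε : 0 < ε) :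
    ∀ᶠ y in 𝓝 x, (((f x).toReal + inner ℝ xs (y - x) - ε * ‖y - x‖ : ℝ) : EReal) ≤ f y := by
  obtain ⟨hx_top, hx_bot, hlim⟩ := hxs
  have hquot : ∀ᶠ y in 𝓝[≠] x, ((-ε : ℝ) : EReal) <
      (f y - f x - ((inner ℝ xs (y - x) : ℝ) : EReal)) * ((‖y - x‖⁻¹ : ℝ) : EReal) :=
    eventually_lt_of_lt_liminf (lt_of_lt_of_le (by exact_mod_cast neg_neg_of_pos hε) hlim)
      (isBoundedUnder_of ⟨⊥, fun _ => bot_le⟩)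
  obtain ⟨r, hr⟩ : ∃ r : ℝ, f x = r := ⟨_, (EReal.coe_toReal hx_top hx_bot).symm⟩
  rw [hr] at hquot
  rw [hr, EReal.toReal_coe]
  filter_upwards [eventually_nhdsWithin_iff.mp hquot] with y hy
  rcases eq_or_ne y x with rfl | hne
  · simp [hr]
  have hy := hy hne
  have hpos : 0 < ‖y - x‖ := norm_pos_iff.mpr (sub_ne_zero.mpr hne)
  generalize f y = b at hy ⊢
  induction b using EReal.rec with
  | bot => simp [EReal.bot_mul_coe_of_pos (inv_pos.mpr hpos)] at hy
  | top => exact le_top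
  | coe a =>
    have hy' : -ε < (a - r - inner ℝ xs (y - x)) * ‖y - x‖⁻¹ := by
      rw [← EReal.coe_sub, ← EReal.coe_sub, ← EReal.coe_mul] at hy
      exact_mod_cast hy
    rw [← div_eq_mul_inv, lt_div_iff₀ hpos] at hy'
    exact_mod_cast (by linarith : r + inner ℝ xs (y - x) - ε * ‖y - x‖ ≤ a)

theorem FrechetSubdiff.eventually_le_comp {n : ℕ} {f : EuclideanSpace ℝ (Fin n) → EReal}
    {x xs : EuclideanSpace ℝ (Fin n)} (hxs : xs ∈ FrechetSubdiff f x)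
    {c : ℝ → EuclideanSpace ℝ (Fin n)} {a : ℝ} (hc : DifferentiableAt ℝ c a) (hca : c a = x)
    {ε : ℝ} (hε : 0 < ε) :
    ∀ᶠ t in 𝓝 a, (((f x).toReal + inner ℝ xs (c t - x) - ε * |t - a| : ℝ) : EReal) ≤ f (c t) := by
  obtain ⟨K, hK, hcK⟩ := hc.hasDerivAt.isBigO_sub.exists_pos
  have hcx : Tendsto c (𝓝 a) (𝓝 x) := hca ▸ hc.continuousAt.tendsto
  filter_upwards [hcx.eventually (FrechetSubdiff.eventually_le hxs (div_pos hε hK)), hcK.bound]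
    with t ht htK
  refine le_trans (EReal.coe_le_coe_iff.mpr ?_) ht
  rw [hca, Real.norm_eq_abs] at htK
  have : ε / K * ‖c t - x‖ ≤ ε * |t - a| :=
    calc ε / K * ‖c t - x‖ ≤ ε / K * (K * |t - a|) := by gcongr
      _ = ε * |t - a| := by field_simp
  linarith

theorem statement0_general {n : ℕ} (f : EuclideanSpace ℝ (Fin n) → EReal)
    (x xs : EuclideanSpace ℝ (Fin n))
    (hxs : xs ∈ FrechetSubdiff f x)
    (c : ℝ → EuclideanSpace ℝ (Fin n))
    (hc : DifferentiableAt ℝ c 0) (hc0 : c 0 = x)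
    (g : ℝ → ℝ) (hfg : ∀ᶠ t in 𝓝 (0:ℝ), f (c t) = (g t : EReal))
    (hg : DifferentiableAt ℝ g 0) :
    deriv g 0 = (inner ℝ xs (deriv c 0) : ℝ) := by
  have hgx : (f x).toReal = g 0 := by rw [← hc0, hfg.self_of_nhds, EReal.toReal_coe]
  have hφ : HasDerivAt (fun t => g t - inner ℝ xs (c t))
      (deriv g 0 - inner ℝ xs (deriv c 0)) 0 := by
    have hinner := (hasDerivAt_const 0 xs).inner ℝ hc.hasDerivAt
    simp only [inner_zero_left, add_zero] at hinner
    exact hg.hasDerivAt.fun_sub hinner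
  refine sub_eq_zero.mp (eq_zero_of_hasDerivAt_of_forall_eventually_ge hφ fun ε hε => ?_)
  filter_upwards [FrechetSubdiff.eventually_le_comp hxs hc hc0 hε, hfg] with t ht hft
  rw [hft, hgx, EReal.coe_le_coe_iff, inner_sub_right] at ht
  rw [hc0]
  linarith

/-- if `x*` is a Fréchet subgradient of `f` at `x ∈ dom f`, `c` is a curve
differentiable at `0` with `c 0 = x`, staying in `dom f` near `0`, and `t ↦ f (c t)`
is real-valued near `0` (with values `g t`) and differentiable at `0`, then
`d/dt f(c(t))|₀ = ⟨x*, c'(0)⟩`. -/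
theorem statement0 {n : ℕ} (f : EuclideanSpace ℝ (Fin n) → EReal)
    (hbot : ∀ y, f y ≠ ⊥)
    (x xs : EuclideanSpace ℝ (Fin n)) (hx : f x ≠ ⊤)
    (hxs : xs ∈ FrechetSubdiff f x)
    (c : ℝ → EuclideanSpace ℝ (Fin n))
    (hc : DifferentiableAt ℝ c 0) (hc0 : c 0 = x)
    (hdom : ∀ᶠ t in 𝓝 (0:ℝ), f (c t) ≠ ⊤)
    (g : ℝ → ℝ) (hfg : ∀ᶠ t in 𝓝 (0:ℝ), f (c t) = (g t : EReal))
    (hg : DifferentiableAt ℝ g 0) :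
    deriv g 0 = (inner ℝ xs (deriv c 0) : ℝ) :=
  statement0_general f x xs hxs c hc hc0 g hfg hg
end

section
/- Let f : ℝⁿ → ℝ ∪ {+∞}, let M ⊆ dom f and x ∈ M, let W be a linear subspace of ℝⁿ contained in the tangent cone to M at x, and suppose there exists g ∈ W such that f(y) − f(x) − ⟨g, y − x⟩ = o(‖y − x‖) as y → x with y ∈ M. Then every Fréchet subgradient x* of f at x satisfies Proj_W(x*) = g, where Proj_W denotes the orthogonal projection of ℝⁿ onto W. -/
open Filter Topology

/-- The tangent cone to a set `S` at a point `x ∈ S`: all `w` such that there are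
positive reals `cₖ → +∞` and vectors `dₖ → 0` with `x + dₖ ∈ S` and `cₖ • dₖ → w`. -/
def TangentCone {F : Type*} [AddCommGroup F] [Module ℝ F] [TopologicalSpace F]
    (S : Set F) (x : F) : Set F :=
  {w | ∃ c : ℕ → ℝ, ∃ d : ℕ → F, (∀ k, 0 < c k) ∧ Tendsto c atTop atTop ∧
      Tendsto d atTop (𝓝 0) ∧ (∀ k, x + d k ∈ S) ∧
      Tendsto (fun k => c k • d k) atTop (𝓝 w)}

/-! Take a tangent sequence `x + dₖ ∈ M` with `cₖ • dₖ → w ≠ 0`. The Fréchet quotient of `x*` at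
`x + dₖ` is the `o(1)` remainder of the first-order expansion along `M` minus
`⟪x* - g, dₖ / ‖dₖ‖⟫ → ⟪x* - g, w⟫ / ‖w‖`, and the subgradient inequality makes its limit
nonnegative. So `⟪x* - g, w⟫ ≤ 0` on the subspace `W`, i.e. `x* - g ⊥ W`, and `g ∈ W` is the
projection of `x*`. -/

open RealInnerProductSpace

theorem Submodule.starProjection_eq_of_inner_nonpos {E : Type*} [NormedAddCommGroup E]
    [InnerProductSpace ℝ E] (K : Submodule ℝ E) [K.HasOrthogonalProjection] {u v : E}
    (hv : v ∈ K) (h : ∀ w ∈ K, ⟪u - v, w⟫ ≤ 0) : K.starProjection u = v := by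
  refine K.eq_starProjection_of_mem_of_inner_eq_zero hv fun w hw => le_antisymm (h w hw) ?_
  simpa [inner_neg_right] using h (-w) (K.neg_mem hw)

section TangentDirection

variable {E : Type*} [NormedAddCommGroup E]

theorem tendsto_inv_norm_smul_of_tendsto_smul [NormedSpace ℝ E] {c : ℕ → ℝ} {d : ℕ → E}
    {w : E} (hc : ∀ k, 0 < c k) (hcd : Tendsto (fun k => c k • d k) atTop (𝓝 w))
    (hw : w ≠ 0) : Tendsto (fun k => ‖d k‖⁻¹ • d k) atTop (𝓝 (‖w‖⁻¹ • w)) := by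
  have hnormalize : ∀ k, ‖c k • d k‖⁻¹ • (c k • d k) = ‖d k‖⁻¹ • d k := fun k => by
    rw [norm_smul, Real.norm_of_nonneg (hc k).le, smul_smul, mul_inv, mul_right_comm,
      inv_mul_cancel₀ (hc k).ne', one_mul]
  exact ((hcd.norm.inv₀ (norm_ne_zero_iff.2 hw)).smul hcd).congr hnormalize

variable [InnerProductSpace ℝ E]

theorem tendsto_frechetQuotient_of_isLittleO {φ : E → ℝ} {M : Set E} {x g v w : E}
    (hlo : (fun y => φ y - φ x - ⟪g, y - x⟫) =o[𝓝[M] x] (fun y => y - x))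
    {c : ℕ → ℝ} {d : ℕ → E} (hc : ∀ k, 0 < c k) (hd : Tendsto d atTop (𝓝 0))
    (hdM : ∀ k, x + d k ∈ M) (hcd : Tendsto (fun k => c k • d k) atTop (𝓝 w)) (hw : w ≠ 0) :
    Tendsto (fun k => (φ (x + d k) - φ x - ⟪v, d k⟫) * ‖d k‖⁻¹) atTop
      (𝓝 (-(⟪v - g, w⟫ * ‖w‖⁻¹))) := by
  have hy : Tendsto (fun k => x + d k) atTop (𝓝[M] x) :=
    tendsto_nhdsWithin_iff.2 ⟨by simpa using hd.const_add x, .of_forall hdM⟩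
  have hremainder : Tendsto (fun k => (φ (x + d k) - φ x - ⟪g, d k⟫) / ‖d k‖) atTop (𝓝 0) := by
    simpa using ((Asymptotics.isLittleO_norm_right.2 hlo).comp_tendsto hy).tendsto_div_nhds_zero
  have hdirection : Tendsto (fun k => ⟪v - g, ‖d k‖⁻¹ • d k⟫) atTop (𝓝 (⟪v - g, w⟫ * ‖w‖⁻¹)) := by
    simpa [real_inner_smul_right, mul_comm] using
      (tendsto_const_nhds (x := v - g)).inner (𝕜 := ℝ)
        (tendsto_inv_norm_smul_of_tendsto_smul hc hcd hw)
  convert hremainder.sub hdirection using 2 with k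
  · simp only [real_inner_smul_right, inner_sub_left]
    ring
  · ring

end TangentDirection

section FrechetSubdiff

variable {n : ℕ} {f : EuclideanSpace ℝ (Fin n) → EReal} {x v : EuclideanSpace ℝ (Fin n)}

theorem nonneg_of_mem_frechetSubdiff_of_tendsto (hv : v ∈ FrechetSubdiff f x)
    {y : ℕ → EuclideanSpace ℝ (Fin n)} (hfy_top : ∀ k, f (y k) ≠ ⊤) (hfy_bot : ∀ k, f (y k) ≠ ⊥)
    (hy : Tendsto y atTop (𝓝[≠] x)) {L : ℝ}
    (hL : Tendsto (fun k => ((f (y k)).toReal - (f x).toReal - ⟪v, y k - x⟫) * ‖y k - x‖⁻¹)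
      atTop (𝓝 L)) :
    0 ≤ L := by
  obtain ⟨hfx_top, hfx_bot, hliminf⟩ := hv
  set Φ : EuclideanSpace ℝ (Fin n) → EReal := fun z =>
    (f z - f x - ((⟪v, z - x⟫ : ℝ) : EReal)) * ((‖z - x‖⁻¹ : ℝ) : EReal)
  have hΦy : Tendsto (fun k => Φ (y k)) atTop (𝓝 (L : EReal)) := by
    refine (EReal.tendsto_coe.2 hL).congr fun k => ?_
    simp only [Φ]
    rw [← EReal.coe_toReal (hfy_top k) (hfy_bot k), ← EReal.coe_toReal hfx_top hfx_bot]
    norm_cast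
  have hle : liminf Φ (𝓝[≠] x) ≤ liminf (fun k => Φ (y k)) atTop := by
    have h := liminf_le_liminf_of_le (u := Φ) hy
    rwa [← liminf_comp] at h
  exact_mod_cast hliminf.trans (hle.trans hΦy.liminf_eq.le)

theorem inner_sub_nonpos_of_mem_frechetSubdiff_of_mem_tangentCone (hv : v ∈ FrechetSubdiff f x)
    {M : Set (EuclideanSpace ℝ (Fin n))} (hM_top : ∀ y ∈ M, f y ≠ ⊤) (hM_bot : ∀ y ∈ M, f y ≠ ⊥)
    {g : EuclideanSpace ℝ (Fin n)}
    (hlo : (fun y => (f y).toReal - (f x).toReal - ⟪g, y - x⟫) =o[𝓝[M] x] (fun y => y - x))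
    {w : EuclideanSpace ℝ (Fin n)} (hw : w ∈ TangentCone M x) :
    ⟪v - g, w⟫ ≤ 0 := by
  rcases eq_or_ne w 0 with rfl | hw0
  · simp
  obtain ⟨c, d, hc, -, hd, hdM, hcd⟩ := hw
  have hy : Tendsto (fun k => x + d k) atTop (𝓝[≠] x) := by
    refine tendsto_nhdsWithin_iff.2 ⟨by simpa using hd.const_add x, ?_⟩
    filter_upwards [hcd.eventually_ne hw0] with k hk
    simpa using fun h : d k = 0 => hk (by simp [h])
  have hquotient := nonneg_of_mem_frechetSubdiff_of_tendsto hv (fun k => hM_top _ (hdM k))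
    (fun k => hM_bot _ (hdM k)) hy (by
      simpa only [add_sub_cancel_left] using
        tendsto_frechetQuotient_of_isLittleO hlo hc hd hdM hcd hw0)
  exact nonpos_of_mul_nonpos_left (neg_nonneg.1 hquotient) (inv_pos.2 (norm_pos_iff.2 hw0))

end FrechetSubdiff

theorem statement1_general {n : ℕ} (f : EuclideanSpace ℝ (Fin n) → EReal)
    (hbot : ∀ y, f y ≠ ⊥)
    (M : Set (EuclideanSpace ℝ (Fin n))) (hM : ∀ y ∈ M, f y ≠ ⊤)
    (x : EuclideanSpace ℝ (Fin n))
    (W : Submodule ℝ (EuclideanSpace ℝ (Fin n))) (hW : (W : Set _) ⊆ TangentCone M x)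
    (g : EuclideanSpace ℝ (Fin n)) (hgW : g ∈ W)
    (hlo : ∀ ε > (0:ℝ), ∀ᶠ y in 𝓝[M] x,
      |(f y).toReal - (f x).toReal - (inner ℝ g (y - x) : ℝ)| ≤ ε * ‖y - x‖)
    (xs : EuclideanSpace ℝ (Fin n)) (hxs : xs ∈ FrechetSubdiff f x) :
    ((W.orthogonalProjectionOnto xs : W) : EuclideanSpace ℝ (Fin n)) = g :=
  W.starProjection_eq_of_inner_nonpos hgW fun _ hw =>
    inner_sub_nonpos_of_mem_frechetSubdiff_of_mem_tangentCone hxs hM (fun y _ => hbot y)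
      (Asymptotics.isLittleO_iff.2 hlo) (hW hw)

/-- if `M ⊆ dom f`, `x ∈ M`, `W` is a linear subspace contained in the tangent
cone to `M` at `x`, and `g ∈ W` satisfies `f y - f x - ⟨g, y-x⟩ = o(‖y-x‖)` as `y → x` in `M`,
then every Fréchet subgradient `x*` of `f` at `x` has `Proj_W x* = g`. -/
theorem statement1 {n : ℕ} (f : EuclideanSpace ℝ (Fin n) → EReal)
    (hbot : ∀ y, f y ≠ ⊥)
    (M : Set (EuclideanSpace ℝ (Fin n))) (hM : ∀ y ∈ M, f y ≠ ⊤)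
    (x : EuclideanSpace ℝ (Fin n)) (hx : x ∈ M)
    (W : Submodule ℝ (EuclideanSpace ℝ (Fin n))) (hW : (W : Set _) ⊆ TangentCone M x)
    (g : EuclideanSpace ℝ (Fin n)) (hgW : g ∈ W)
    (hlo : ∀ ε > (0:ℝ), ∀ᶠ y in 𝓝[M] x,
      |(f y).toReal - (f x).toReal - (inner ℝ g (y - x) : ℝ)| ≤ ε * ‖y - x‖)
    (xs : EuclideanSpace ℝ (Fin n)) (hxs : xs ∈ FrechetSubdiff f x) :
    ((W.orthogonalProjectionOnto xs : W) : EuclideanSpace ℝ (Fin n)) = g :=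
  statement1_general f hbot M hM x W hW g hgW hlo xs hxs
end

section
/- Let f : ℝⁿ → ℝ ∪ {+∞}, let M ⊆ dom f and x ∈ M, let W be a linear subspace of ℝⁿ contained in the tangent cone to M at x, and suppose there exists g ∈ W such that f(y) − f(x) − ⟨g, y − x⟩ = o(‖y − x‖) as y → x with y ∈ M. Then ‖g‖ ≤ ‖x*‖ for every Fréchet subgradient x* of f at x. -/
/-!
Along any tangent direction `w` of `M` at `x`, the Fréchet lower bound
`f y - f x ≥ ⟪xs, y - x⟫ - o(‖y - x‖)` and the estimate `f y - f x ≤ ⟪g, y - x⟫ + o(‖y - x‖)`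
give `⟪xs - g, w⟫ ≤ 0`. Since `W` is a subspace, `w = -g` is a tangent direction, so
`‖g‖² ≤ ⟪xs, g⟫ ≤ ‖xs‖ ‖g‖`.
-/

open Filter Topology

theorem TangentCone.apply_nonpos {E : Type*} [NormedAddCommGroup E] [NormedSpace ℝ E]
    {S : Set E} {x w : E} (hw : w ∈ TangentCone S x) (ℓ : E →L[ℝ] ℝ)
    (hℓ : ∀ ε > (0:ℝ), ∀ᶠ y in 𝓝[S] x, ℓ (y - x) ≤ ε * ‖y - x‖) :
    ℓ w ≤ 0 := by
  obtain ⟨c, d, hc_pos, -, hd, hdS, hcd⟩ := hw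
  have hy : Tendsto (fun k => x + d k) atTop (𝓝[S] x) :=
    tendsto_nhdsWithin_iff.mpr ⟨by simpa using hd.const_add x, .of_forall hdS⟩
  have hbound : ∀ ε > (0:ℝ), ℓ w ≤ ε * ‖w‖ := by
    intro ε hε
    have hscaled : ∀ᶠ k in atTop, ℓ (c k • d k) ≤ ε * ‖c k • d k‖ := by
      filter_upwards [hy.eventually (hℓ ε hε)] with k hk
      rw [add_sub_cancel_left] at hk
      rw [map_smul, smul_eq_mul, norm_smul, Real.norm_of_nonneg (hc_pos k).le, mul_left_comm]
      exact mul_le_mul_of_nonneg_left hk (hc_pos k).le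
    exact le_of_tendsto_of_tendsto ((ℓ.continuous.tendsto w).comp hcd)
      (hcd.norm.const_mul ε) hscaled
  have hlim : Tendsto (fun ε : ℝ => ε * ‖w‖) (𝓝[>] 0) (𝓝 0) := by
    simpa using (tendsto_nhdsWithin_of_tendsto_nhds (tendsto_id (x := 𝓝 (0:ℝ)))).mul_const ‖w‖
  exact ge_of_tendsto hlim (eventually_nhdsWithin_of_forall hbound)

section Frechet

variable {n : ℕ} {f : EuclideanSpace ℝ (Fin n) → EReal} {x xs : EuclideanSpace ℝ (Fin n)}

theorem FrechetSubdiff.eventually_inner_sub_le (hxs : xs ∈ FrechetSubdiff f x)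
    {ε : ℝ} (hε : 0 < ε) :
    ∀ᶠ y in 𝓝[≠] x, f y ≠ ⊤ → f y ≠ ⊥ →
      inner ℝ xs (y - x) - ε * ‖y - x‖ ≤ (f y).toReal - (f x).toReal := by
  obtain ⟨hx_top, hx_bot, hliminf⟩ := hxs
  have hquot : ∀ᶠ y in 𝓝[≠] x, ((-ε : ℝ) : EReal) <
      (f y - f x - ((inner ℝ xs (y - x) : ℝ) : EReal)) * ((‖y - x‖⁻¹ : ℝ) : EReal) :=
    eventually_lt_of_lt_liminf (lt_of_lt_of_le (by exact_mod_cast neg_neg_of_pos hε) hliminf)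
  filter_upwards [hquot, self_mem_nhdsWithin] with y hy hyx hy_top hy_bot
  have hpos : 0 < ‖y - x‖ := norm_pos_iff.mpr (sub_ne_zero.mpr hyx)
  rw [← EReal.coe_toReal hy_top hy_bot, ← EReal.coe_toReal hx_top hx_bot, ← EReal.coe_sub,
    ← EReal.coe_sub, ← EReal.coe_mul, EReal.coe_lt_coe_iff, ← div_eq_mul_inv,
    lt_div_iff₀ hpos] at hy
  linarith

theorem FrechetSubdiff.eventually_inner_sub_gradient_le (hxs : xs ∈ FrechetSubdiff f x)
    (hbot : ∀ y, f y ≠ ⊥) {M : Set (EuclideanSpace ℝ (Fin n))} (hM : ∀ y ∈ M, f y ≠ ⊤)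
    {g : EuclideanSpace ℝ (Fin n)}
    (hlo : ∀ ε > (0:ℝ), ∀ᶠ y in 𝓝[M] x,
      |(f y).toReal - (f x).toReal - (inner ℝ g (y - x) : ℝ)| ≤ ε * ‖y - x‖)
    {ε : ℝ} (hε : 0 < ε) :
    ∀ᶠ y in 𝓝[M] x, inner ℝ (xs - g) (y - x) ≤ ε * ‖y - x‖ := by
  have hlower : ∀ᶠ y in 𝓝 x, y ≠ x → f y ≠ ⊤ → f y ≠ ⊥ →
      inner ℝ xs (y - x) - ε / 2 * ‖y - x‖ ≤ (f y).toReal - (f x).toReal :=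
    eventually_nhdsWithin_iff.mp (FrechetSubdiff.eventually_inner_sub_le hxs (half_pos hε))
  filter_upwards [nhdsWithin_le_nhds hlower, hlo (ε / 2) (half_pos hε), self_mem_nhdsWithin]
    with y hy_lower hy_upper hyM
  rcases eq_or_ne y x with rfl | hyx
  · simp
  have := hy_lower hyx (hM y hyM) (hbot y)
  rw [inner_sub_left]
  linarith [(abs_le.mp hy_upper).2]

end Frechet

theorem statement2_general {n : ℕ} (f : EuclideanSpace ℝ (Fin n) → EReal)
    (hbot : ∀ y, f y ≠ ⊥)
    (M : Set (EuclideanSpace ℝ (Fin n))) (hM : ∀ y ∈ M, f y ≠ ⊤)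
    (x : EuclideanSpace ℝ (Fin n))
    (W : Submodule ℝ (EuclideanSpace ℝ (Fin n))) (hW : (W : Set _) ⊆ TangentCone M x)
    (g : EuclideanSpace ℝ (Fin n)) (hgW : g ∈ W)
    (hlo : ∀ ε > (0:ℝ), ∀ᶠ y in 𝓝[M] x,
      |(f y).toReal - (f x).toReal - (inner ℝ g (y - x) : ℝ)| ≤ ε * ‖y - x‖)
    (xs : EuclideanSpace ℝ (Fin n)) (hxs : xs ∈ FrechetSubdiff f x) :
    ‖g‖ ≤ ‖xs‖ := by
  have hneg : inner ℝ (xs - g) (-g) ≤ 0 :=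
    TangentCone.apply_nonpos (hW (W.neg_mem hgW)) (innerSL ℝ (xs - g)) fun _ hε =>
      FrechetSubdiff.eventually_inner_sub_gradient_le hxs hbot hM hlo hε
  have hsq : ‖g‖ ^ 2 ≤ inner ℝ xs g := by
    rw [inner_neg_right, inner_sub_left, real_inner_self_eq_norm_sq] at hneg
    linarith
  nlinarith [real_inner_le_norm xs g, norm_nonneg g, norm_nonneg xs]

/-- if `M ⊆ dom f`, `x ∈ M`, `W` is a linear subspace contained in the tangent
cone to `M` at `x`, and `g ∈ W` satisfies `f y - f x - ⟨g, y-x⟩ = o(‖y-x‖)` as `y → x` in `M`,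
then `‖g‖ ≤ ‖x*‖` for every Fréchet subgradient `x*` of `f` at `x`. -/
theorem statement2 {n : ℕ} (f : EuclideanSpace ℝ (Fin n) → EReal)
    (hbot : ∀ y, f y ≠ ⊥)
    (M : Set (EuclideanSpace ℝ (Fin n))) (hM : ∀ y ∈ M, f y ≠ ⊤)
    (x : EuclideanSpace ℝ (Fin n)) (hx : x ∈ M)
    (W : Submodule ℝ (EuclideanSpace ℝ (Fin n))) (hW : (W : Set _) ⊆ TangentCone M x)
    (g : EuclideanSpace ℝ (Fin n)) (hgW : g ∈ W)
    (hlo : ∀ ε > (0:ℝ), ∀ᶠ y in 𝓝[M] x,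
      |(f y).toReal - (f x).toReal - (inner ℝ g (y - x) : ℝ)| ≤ ε * ‖y - x‖)
    (xs : EuclideanSpace ℝ (Fin n)) (hxs : xs ∈ FrechetSubdiff f x) :
    ‖g‖ ≤ ‖xs‖ :=
  statement2_general f hbot M hM x W hW g hgW hlo xs hxs
end

section
/- Let f : ℝⁿ → ℝ ∪ {+∞}, let x ∈ dom f, and let x* be a Fréchet subgradient of f at x. Let S be a subset of the graph of f, Graph f = {(y, f(y)) : y ∈ dom f} ⊆ ℝⁿ × ℝ, with u := (x, f(x)) ∈ S. Then for every vector w ∈ ℝⁿ × ℝ such that both w and −w belong to the tangent cone to S at u, one has ⟨(x*, −1), w⟩ = 0; in particular (x*, −1) is orthogonal to every linear subspace of ℝⁿ × ℝ contained in the tangent cone to S at u. -/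
open Filter Topology

/-!
A Fréchet subgradient `x*` says that, near `x`, the graph of `f` lies above the hyperplane
through `(x, f x)` with normal `(x*, -1)` up to `o(‖y - x‖)`. Blowing up by the tangent-cone
sequences turns this into `⟨(x*, -1), w⟩ ≤ 0` for every tangent direction `w`; applied to `w`
and `-w` it gives equality.
-/

section TangentCone

variable {F : Type*} [NormedAddCommGroup F] [NormedSpace ℝ F]

theorem TangentCone.apply_le_zero {S : Set F} {u : F} (L : F →L[ℝ] ℝ)
    (hL : ∀ ε > 0, ∀ᶠ p in 𝓝 u, p ∈ S → L (p - u) ≤ ε * ‖p - u‖)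
    {w : F} (hw : w ∈ TangentCone S u) : L w ≤ 0 := by
  obtain ⟨c, d, hc, -, hd, hdS, hcd⟩ := hw
  have hdu : Tendsto (fun k => u + d k) atTop (𝓝 u) := by
    simpa using tendsto_const_nhds.add hd
  have bound : ∀ ε > 0, L w ≤ ε * ‖w‖ := by
    intro ε hε
    have hev : ∀ᶠ k in atTop, L (c k • d k) ≤ ε * ‖c k • d k‖ := by
      filter_upwards [hdu.eventually (hL ε hε)] with k hk
      have hdk := hk (hdS k)
      rw [add_sub_cancel_left] at hdk
      rw [map_smul, smul_eq_mul, norm_smul, Real.norm_of_nonneg (hc k).le]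
      nlinarith [hc k]
    exact le_of_tendsto_of_tendsto ((L.continuous.tendsto w).comp hcd)
      (tendsto_const_nhds.mul hcd.norm) hev
  have hlim : Tendsto (fun ε : ℝ => ε * ‖w‖) (𝓝[>] 0) (𝓝 0) := by
    simpa using ((tendsto_id (x := 𝓝 (0 : ℝ))).mul_const ‖w‖).mono_left nhdsWithin_le_nhds
  exact ge_of_tendsto hlim (eventually_nhdsWithin_of_forall bound)

theorem TangentCone.apply_eq_zero {S : Set F} {u : F} (L : F →L[ℝ] ℝ)
    (hL : ∀ ε > 0, ∀ᶠ p in 𝓝 u, p ∈ S → L (p - u) ≤ ε * ‖p - u‖)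
    {w : F} (hw : w ∈ TangentCone S u) (hw' : -w ∈ TangentCone S u) : L w = 0 := by
  have hneg := TangentCone.apply_le_zero L hL hw'
  rw [map_neg] at hneg
  linarith [TangentCone.apply_le_zero L hL hw]

end TangentCone

/-- Pairing with `(x*, -1)`. -/
noncomputable def graphNormal {E : Type*} [NormedAddCommGroup E] [InnerProductSpace ℝ E]
    (xs : E) : E × ℝ →L[ℝ] ℝ :=
  (innerSL ℝ xs).comp (.fst ℝ E ℝ) - .snd ℝ E ℝ

@[simp]
theorem graphNormal_apply {E : Type*} [NormedAddCommGroup E] [InnerProductSpace ℝ E]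
    (xs : E) (p : E × ℝ) : graphNormal xs p = inner ℝ xs p.1 - p.2 := rfl

namespace FrechetSubdiff

variable {n : ℕ} {f : EuclideanSpace ℝ (Fin n) → EReal} {x xs : EuclideanSpace ℝ (Fin n)}

theorem eventually_inner_sub_le_s4 (hxs : xs ∈ FrechetSubdiff f x) {r : ℝ} (hr : f x = r)
    {ε : ℝ} (hε : 0 < ε) :
    ∀ᶠ y in 𝓝 x, ∀ s : ℝ, f y = s → inner ℝ xs (y - x) - (s - r) ≤ ε * ‖y - x‖ := by
  have hev : ∀ᶠ y in 𝓝[≠] x, ((-ε : ℝ) : EReal) <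
      (f y - f x - ((inner ℝ xs (y - x) : ℝ) : EReal)) * ((‖y - x‖⁻¹ : ℝ) : EReal) :=
    eventually_lt_of_lt_liminf (lt_of_lt_of_le (by exact_mod_cast neg_neg_of_pos hε) hxs.2.2)
  filter_upwards [eventually_nhdsWithin_iff.mp hev] with y hy s hs
  by_cases hyx : y = x
  · subst hyx
    have hsr : s = r := by exact_mod_cast hs.symm.trans hr
    simp [hsr]
  · have hq := hy hyx
    rw [hs, hr] at hq
    have hq' : -ε < (s - r - inner ℝ xs (y - x)) * ‖y - x‖⁻¹ := by exact_mod_cast hq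
    rw [← div_eq_mul_inv, lt_div_iff₀ (norm_pos_iff.mpr (sub_ne_zero.mpr hyx))] at hq'
    linarith

theorem eventually_graphNormal_le (hxs : xs ∈ FrechetSubdiff f x) {r : ℝ} (hr : f x = r)
    {S : Set (EuclideanSpace ℝ (Fin n) × ℝ)}
    (hS : S ⊆ {p : EuclideanSpace ℝ (Fin n) × ℝ | f p.1 = (p.2 : EReal)}) :
    ∀ ε > 0, ∀ᶠ p in 𝓝 (x, r), p ∈ S → graphNormal xs (p - (x, r)) ≤ ε * ‖p - (x, r)‖ := by
  intro ε hε
  filter_upwards [(continuous_fst.tendsto (x, r)).eventually (eventually_inner_sub_le_s4 hxs hr hε)]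
    with p hp hpS
  calc graphNormal xs (p - (x, r)) ≤ ε * ‖p.1 - x‖ := by simpa using hp p.2 (hS hpS)
    _ ≤ ε * ‖p - (x, r)‖ := by gcongr; exact norm_fst_le (p - (x, r))

end FrechetSubdiff

theorem statement4_general {n : ℕ} (f : EuclideanSpace ℝ (Fin n) → EReal)
    (x xs : EuclideanSpace ℝ (Fin n)) (hxs : xs ∈ FrechetSubdiff f x)
    (r : ℝ) (hr : f x = (r : EReal))
    (S : Set (EuclideanSpace ℝ (Fin n) × ℝ))
    (hS : S ⊆ {p : EuclideanSpace ℝ (Fin n) × ℝ | f p.1 = (p.2 : EReal)}) :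
    (∀ w : EuclideanSpace ℝ (Fin n) × ℝ,
        w ∈ TangentCone S (x, r) → -w ∈ TangentCone S (x, r) →
        (inner ℝ xs w.1 : ℝ) + (-1) * w.2 = 0) ∧
    (∀ T : Submodule ℝ (EuclideanSpace ℝ (Fin n) × ℝ),
        (T : Set _) ⊆ TangentCone S (x, r) →
        ∀ w ∈ T, (inner ℝ xs w.1 : ℝ) + (-1) * w.2 = 0) := by
  have hL := FrechetSubdiff.eventually_graphNormal_le hxs hr hS
  have orth : ∀ w : EuclideanSpace ℝ (Fin n) × ℝ,
      w ∈ TangentCone S (x, r) → -w ∈ TangentCone S (x, r) →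
      (inner ℝ xs w.1 : ℝ) + (-1) * w.2 = 0 := fun w hw hw' => by
    simpa [sub_eq_add_neg] using TangentCone.apply_eq_zero _ hL hw hw'
  exact ⟨orth, fun T hT w hwT => orth w (hT hwT) (hT (T.neg_mem hwT))⟩

/-- let `x*` be a Fréchet subgradient of `f` at `x ∈ dom f` (so `f x = r ∈ ℝ`),
and let `S ⊆ Graph f` contain `u = (x, r)`.  Then for every `w ∈ ℝⁿ × ℝ` with both `w` and
`-w` in the tangent cone to `S` at `u`, one has `⟨(x*, -1), w⟩ = 0`; in particular
`(x*, -1)` is orthogonal to every linear subspace contained in that tangent cone. -/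
theorem statement4 {n : ℕ} (f : EuclideanSpace ℝ (Fin n) → EReal)
    (hbot : ∀ y, f y ≠ ⊥)
    (x xs : EuclideanSpace ℝ (Fin n)) (hxs : xs ∈ FrechetSubdiff f x)
    (r : ℝ) (hr : f x = (r : EReal))
    (S : Set (EuclideanSpace ℝ (Fin n) × ℝ))
    (hS : S ⊆ {p : EuclideanSpace ℝ (Fin n) × ℝ | f p.1 = (p.2 : EReal)})
    (hu : (x, r) ∈ S) :
    (∀ w : EuclideanSpace ℝ (Fin n) × ℝ,
        w ∈ TangentCone S (x, r) → -w ∈ TangentCone S (x, r) →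
        (inner ℝ xs w.1 : ℝ) + (-1) * w.2 = 0) ∧
    (∀ T : Submodule ℝ (EuclideanSpace ℝ (Fin n) × ℝ),
        (T : Set _) ⊆ TangentCone S (x, r) →
        ∀ w ∈ T, (inner ℝ xs w.1 : ℝ) + (-1) * w.2 = 0) :=
  statement4_general f x xs hxs r hr S hS
end

section
/- Let f : ℝ → ℝ be defined by f(x) = x for x ≤ 0 and f(x) = −√x for x > 0. Then the Clarke subdifferential of f at 0 is ∂°f(0) = (−∞, 1]; in particular 0 ∈ ∂°f(0), i.e., 0 is a Clarke critical point of f. -/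
open Filter Topology Pointwise

/-- The Fréchet subdifferential of `f : ℝ → ℝ` at `x`: the set of `x*` with
`liminf_{y → x, y ≠ x} (f y - f x - x*·(y-x))/|y-x| ≥ 0` (liminf in the extended reals). -/
noncomputable def FrechetSubdiff1 (f : ℝ → ℝ) (x : ℝ) : Set ℝ :=
  {xs | 0 ≤ Filter.liminf
      (fun y => (((f y - f x - xs * (y - x)) / |y - x| : ℝ) : EReal)) (𝓝[≠] x)}

/-- The limiting subdifferential `∂f(x)`: limits `xₖ* → p` with `xₖ* ∈ ∂̂f(xₖ)`,
`xₖ → x` and `f xₖ → f x`. -/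
noncomputable def LimitingSubdiff1 (f : ℝ → ℝ) (x : ℝ) : Set ℝ :=
  {p | ∃ (y ys : ℕ → ℝ), (∀ k, ys k ∈ FrechetSubdiff1 f (y k)) ∧
      Tendsto y atTop (𝓝 x) ∧ Tendsto (fun k => f (y k)) atTop (𝓝 (f x)) ∧
      Tendsto ys atTop (𝓝 p)}

/-- The asymptotic limiting subdifferential `∂^∞f(x)`: limits `tₖ·yₖ* → q` with
`yₖ* ∈ ∂̂f(yₖ)`, `yₖ → x`, `f yₖ → f x` and `tₖ → 0⁺`. -/
noncomputable def AsymptoticSubdiff1 (f : ℝ → ℝ) (x : ℝ) : Set ℝ :=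
  {q | ∃ (y ys : ℕ → ℝ) (t : ℕ → ℝ), (∀ k, ys k ∈ FrechetSubdiff1 f (y k)) ∧
      (∀ k, 0 < t k) ∧ Tendsto y atTop (𝓝 x) ∧
      Tendsto (fun k => f (y k)) atTop (𝓝 (f x)) ∧
      Tendsto t atTop (𝓝 0) ∧ Tendsto (fun k => t k * ys k) atTop (𝓝 q)}

/-- The Clarke subdifferential `∂°f(x) = closure (convexHull (∂f(x) + ∂^∞f(x)))`. -/
noncomputable def ClarkeSubdiff1 (f : ℝ → ℝ) (x : ℝ) : Set ℝ :=
  closure (convexHull ℝ (LimitingSubdiff1 f x + AsymptoticSubdiff1 f x))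

/-!
Every Fréchet subgradient of `f` is at most `1`: the slope is `1` on the left half-line and
negative on the right, while at `0` the right slopes `-1/√y` tend to `-∞`, so there is none at all.
Hence limiting subgradients are `≤ 1` and asymptotic ones `≤ 0`. Conversely `1` is a limiting
subgradient (approach `0` from the left), and rescaling the derivatives `-1/(2√y) → -∞` on the
right produces every negative asymptotic subgradient; `∂f(0) + ∂^∞f(0)` thus contains `(-∞, 1)`,
whose closure is `(-∞, 1]`.
-/

open Set

section Subdifferentials

variable {f : ℝ → ℝ} {x c : ℝ}

-- For `y > x` the Fréchet quotient of `xs` is `slope f x y - xs`.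
theorem le_of_mem_frechetSubdiff1_of_eventually_slope_le {xs : ℝ}
    (hxs : xs ∈ FrechetSubdiff1 f x) (h : ∀ᶠ y in 𝓝[>] x, slope f x y ≤ c) : xs ≤ c := by
  have hquot : ∀ᶠ y in 𝓝[>] x,
      (((f y - f x - xs * (y - x)) / |y - x| : ℝ) : EReal) ≤ ((c - xs : ℝ) : EReal) := by
    filter_upwards [h, self_mem_nhdsWithin] with y hy (hxy : x < y)
    have hpos : 0 < y - x := sub_pos.2 hxy
    rw [EReal.coe_le_coe_iff, abs_of_pos hpos, sub_div, mul_div_cancel_right₀ _ hpos.ne',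
      ← slope_def_field]
    linarith
  have hfreq := hquot.frequently.filter_mono (nhdsWithin_mono x fun _ (hy : x < _) => hy.ne')
  have := hxs.trans (liminf_le_of_frequently_le' hfreq)
  exact sub_nonneg.1 (EReal.coe_nonneg.1 this)

theorem le_of_mem_frechetSubdiff1_of_hasDerivWithinAt {xs d : ℝ}
    (hxs : xs ∈ FrechetSubdiff1 f x) (hd : HasDerivWithinAt f d (Ioi x) x) : xs ≤ d := by
  have hslope : Tendsto (slope f x) (𝓝[>] x) (𝓝 d) := by
    simpa using hasDerivWithinAt_iff_tendsto_slope.1 hd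
  refine le_of_forall_pos_lt_add fun ε hε => ?_
  have := le_of_mem_frechetSubdiff1_of_eventually_slope_le hxs
    (hslope.eventually (ge_mem_nhds (lt_add_of_pos_right d (half_pos hε))))
  linarith

theorem frechetSubdiff1_eq_empty_of_tendsto_slope_atBot
    (h : Tendsto (slope f x) (𝓝[>] x) atBot) : FrechetSubdiff1 f x = ∅ :=
  eq_empty_of_forall_notMem fun xs hxs => by
    have := le_of_mem_frechetSubdiff1_of_eventually_slope_le hxs (h.eventually_le_atBot (xs - 1))
    linarith

theorem mem_frechetSubdiff1_of_hasDerivAt {d : ℝ} (hd : HasDerivAt f d x) :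
    d ∈ FrechetSubdiff1 f x := by
  have hq : Tendsto (fun y => (f y - f x - d * (y - x)) / |y - x|) (𝓝 x) (𝓝 0) := by
    refine squeeze_zero_norm (fun y => le_of_eq ?_) (hasDerivAt_iff_tendsto.1 hd)
    rw [Real.norm_eq_abs, abs_div, abs_abs, div_eq_inv_mul, Real.norm_eq_abs, Real.norm_eq_abs,
      smul_eq_mul, mul_comm (y - x)]
  have hqe := EReal.tendsto_coe.2 (hq.mono_left (nhdsWithin_le_nhds (s := {x}ᶜ)))
  simp only [FrechetSubdiff1, mem_ofPred_eq, hqe.liminf_eq, EReal.coe_zero, le_refl]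

theorem limitingSubdiff1_subset_Iic
    (hbound : ∀ y, ∀ ys ∈ FrechetSubdiff1 f y, ys ≤ c) : LimitingSubdiff1 f x ⊆ Iic c := by
  rintro p ⟨y, ys, hys, -, -, hp⟩
  exact le_of_tendsto' hp fun k => hbound _ _ (hys k)

theorem asymptoticSubdiff1_subset_Iic_zero
    (hbound : ∀ y, ∀ ys ∈ FrechetSubdiff1 f y, ys ≤ c) : AsymptoticSubdiff1 f x ⊆ Iic 0 := by
  rintro q ⟨y, ys, t, hys, ht, -, -, ht0, hq⟩
  have hlim : Tendsto (fun k => t k * c) atTop (𝓝 0) := by simpa using ht0.mul_const c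
  exact le_of_tendsto_of_tendsto' hq hlim fun k =>
    mul_le_mul_of_nonneg_left (hbound _ _ (hys k)) (ht k).le

theorem clarkeSubdiff1_subset_Iic
    (hbound : ∀ y, ∀ ys ∈ FrechetSubdiff1 f y, ys ≤ c) : ClarkeSubdiff1 f x ⊆ Iic c := by
  have hsum : LimitingSubdiff1 f x + AsymptoticSubdiff1 f x ⊆ Iic c := by
    rintro _ ⟨p, hp, q, hq, rfl⟩
    have hp' : p ≤ c := limitingSubdiff1_subset_Iic hbound hp
    have hq' : q ≤ 0 := asymptoticSubdiff1_subset_Iic_zero hbound hq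
    exact (add_le_add hp' hq').trans_eq (add_zero c)
  exact closure_minimal (convexHull_min hsum (convex_Iic c)) isClosed_Iic

variable {l : Filter ℝ} [l.IsCountablyGenerated] {g : ℝ → ℝ}

theorem mem_limitingSubdiff1_of_tendsto {p : ℝ} (hf : ContinuousAt f x) (hl : l ≤ 𝓝 x)
    (hg : ∃ᶠ y in l, g y ∈ FrechetSubdiff1 f y) (hp : Tendsto g l (𝓝 p)) :
    p ∈ LimitingSubdiff1 f x := by
  obtain ⟨y, hy, hgy⟩ := exists_seq_forall_of_frequently hg
  exact ⟨y, g ∘ y, hgy, hy.mono_right hl, hf.tendsto.comp (hy.mono_right hl), hp.comp hy⟩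

/-- Rescaling subgradients `g y → -∞` by `t = q / g y → 0⁺` realises every `q < 0`. -/
theorem Iio_zero_subset_asymptoticSubdiff1 (hf : ContinuousAt f x) (hl : l ≤ 𝓝 x)
    (hg : ∃ᶠ y in l, g y ∈ FrechetSubdiff1 f y) (hbot : Tendsto g l atBot) :
    Iio 0 ⊆ AsymptoticSubdiff1 f x := by
  intro q (hq : q < 0)
  obtain ⟨y, hy, hgy⟩ :=
    exists_seq_forall_of_frequently (hg.and_eventually (hbot.eventually_lt_atBot 0))
  have hgy_atBot : Tendsto (g ∘ y) atTop atBot := hbot.comp hy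
  refine ⟨y, g ∘ y, fun k => q / g (y k), fun k => (hgy k).1,
    fun k => div_pos_of_neg_of_neg hq (hgy k).2, hy.mono_right hl,
    hf.tendsto.comp (hy.mono_right hl), ?_, ?_⟩
  · simpa [div_eq_mul_inv] using hgy_atBot.inv_tendsto_atBot.const_mul q
  · exact tendsto_const_nhds.congr fun k => (div_mul_cancel₀ q (hgy k).2.ne).symm

theorem Iic_subset_clarkeSubdiff1 {p : ℝ} (hp : p ∈ LimitingSubdiff1 f x)
    (hA : Iio 0 ⊆ AsymptoticSubdiff1 f x) : Iic p ⊆ ClarkeSubdiff1 f x := by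
  have hsum : Iio p ⊆ LimitingSubdiff1 f x + AsymptoticSubdiff1 f x := fun z (hz : z < p) =>
    ⟨p, hp, z - p, hA (sub_neg.2 hz), add_sub_cancel p z⟩
  rw [← closure_Iio]
  exact closure_mono (hsum.trans (subset_convexHull ℝ _))

end Subdifferentials

noncomputable def idNegSqrt (x : ℝ) : ℝ := if x ≤ 0 then x else -√x

theorem idNegSqrt_of_nonpos {x : ℝ} (hx : x ≤ 0) : idNegSqrt x = x := if_pos hx

theorem idNegSqrt_of_pos {x : ℝ} (hx : 0 < x) : idNegSqrt x = -√x := if_neg hx.not_ge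

theorem continuous_idNegSqrt : Continuous idNegSqrt :=
  continuous_id.if_le Real.continuous_sqrt.neg continuous_id continuous_const
    fun x (hx : x = 0) => by simp [hx]

theorem hasDerivAt_idNegSqrt_of_neg {x : ℝ} (hx : x < 0) : HasDerivAt idNegSqrt 1 x :=
  (hasDerivAt_id x).congr_of_eventuallyEq <|
    (gt_mem_nhds hx).mono fun _ hy => idNegSqrt_of_nonpos hy.le

theorem hasDerivAt_idNegSqrt_of_pos {x : ℝ} (hx : 0 < x) :
    HasDerivAt idNegSqrt (-(1 / (2 * √x))) x :=
  (Real.hasDerivAt_sqrt hx.ne').neg.congr_of_eventuallyEq <|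
    (lt_mem_nhds hx).mono fun _ hy => idNegSqrt_of_pos hy

theorem tendsto_inv_sqrt_nhdsGT_zero : Tendsto (fun y => (√y)⁻¹) (𝓝[>] 0) atTop := by
  refine tendsto_inv_nhdsGT_zero.comp (tendsto_nhdsWithin_iff.2 ⟨?_, ?_⟩)
  · simpa using (Real.continuous_sqrt.tendsto 0).mono_left nhdsWithin_le_nhds
  · exact eventually_nhdsWithin_of_forall fun _ hy => Real.sqrt_pos.2 hy

theorem tendsto_slope_idNegSqrt_zero : Tendsto (slope idNegSqrt 0) (𝓝[>] 0) atBot := by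
  refine tendsto_neg_atTop_atBot.comp tendsto_inv_sqrt_nhdsGT_zero |>.congr' ?_
  filter_upwards [self_mem_nhdsWithin] with y (hy : 0 < y)
  rw [slope_def_field, idNegSqrt_of_pos hy, idNegSqrt_of_nonpos le_rfl, sub_zero, sub_zero,
    Function.comp_apply, neg_div, Real.sqrt_div_self', one_div]

theorem frechetSubdiff1_idNegSqrt_le_one (x : ℝ) :
    ∀ xs ∈ FrechetSubdiff1 idNegSqrt x, xs ≤ 1 := by
  intro xs hxs
  rcases lt_trichotomy x 0 with hx | rfl | hx
  · exact le_of_mem_frechetSubdiff1_of_hasDerivWithinAt hxs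
      (hasDerivAt_idNegSqrt_of_neg hx).hasDerivWithinAt
  · simp [frechetSubdiff1_eq_empty_of_tendsto_slope_atBot tendsto_slope_idNegSqrt_zero] at hxs
  · refine (le_of_mem_frechetSubdiff1_of_hasDerivWithinAt hxs
      (hasDerivAt_idNegSqrt_of_pos hx).hasDerivWithinAt).trans ?_
    have : 0 ≤ 1 / (2 * √x) := by positivity
    linarith

theorem one_mem_limitingSubdiff1_idNegSqrt : (1 : ℝ) ∈ LimitingSubdiff1 idNegSqrt 0 := by
  have hd : ∀ᶠ y in 𝓝[<] 0, 1 ∈ FrechetSubdiff1 idNegSqrt y :=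
    eventually_nhdsWithin_of_forall fun _ hy =>
      mem_frechetSubdiff1_of_hasDerivAt (hasDerivAt_idNegSqrt_of_neg hy)
  exact mem_limitingSubdiff1_of_tendsto continuous_idNegSqrt.continuousAt nhdsWithin_le_nhds
    hd.frequently tendsto_const_nhds

theorem Iio_zero_subset_asymptoticSubdiff1_idNegSqrt :
    Iio 0 ⊆ AsymptoticSubdiff1 idNegSqrt 0 := by
  have hd : ∀ᶠ y in 𝓝[>] 0, -(1 / (2 * √y)) ∈ FrechetSubdiff1 idNegSqrt y :=
    eventually_nhdsWithin_of_forall fun _ hy =>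
      mem_frechetSubdiff1_of_hasDerivAt (hasDerivAt_idNegSqrt_of_pos hy)
  refine Iio_zero_subset_asymptoticSubdiff1 continuous_idNegSqrt.continuousAt nhdsWithin_le_nhds
    hd.frequently (tendsto_neg_atTop_atBot.comp ?_)
  simpa [mul_inv, mul_comm] using
    tendsto_inv_sqrt_nhdsGT_zero.const_mul_atTop (inv_pos.2 two_pos)

/-- for `f(x) = x` if `x ≤ 0` and `f(x) = -√x` if `x > 0`, one has
`∂°f(0) = (-∞, 1]`; in particular `0 ∈ ∂°f(0)`, i.e. `0` is a Clarke critical point. -/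
theorem statement13 (f : ℝ → ℝ)
    (hf : ∀ x : ℝ, f x = if x ≤ 0 then x else -Real.sqrt x) :
    ClarkeSubdiff1 f 0 = Set.Iic 1 ∧ (0 : ℝ) ∈ ClarkeSubdiff1 f 0 := by
  obtain rfl : f = idNegSqrt := funext hf
  have h : ClarkeSubdiff1 idNegSqrt 0 = Iic 1 :=
    (clarkeSubdiff1_subset_Iic frechetSubdiff1_idNegSqrt_le_one).antisymm
      (Iic_subset_clarkeSubdiff1 one_mem_limitingSubdiff1_idNegSqrt
        Iio_zero_subset_asymptoticSubdiff1_idNegSqrt)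
  exact ⟨h, h ▸ mem_Iic.2 zero_le_one⟩
end

section
/- Let f : ℝ → ℝ be defined by f(x) = x²·sin(1/x) for x ≠ 0 and f(0) = 0. Then f is differentiable at every point of ℝ, and the set of critical values of f, i.e., the image f({x ∈ ℝ : f'(x) = 0}), is an infinite set. -/
/-!
Differentiability at `0` follows from `|x² sin x⁻¹| ≤ x²`. Each interval
`[((2n+1)π)⁻¹, (2nπ)⁻¹]` has endpoints where `x² sin x⁻¹` vanishes and contains
`(2nπ + π/2)⁻¹`, where it is positive; the maximum over the interval is therefore an interior
local maximum, hence a critical point, with a value in `(0, (2nπ)⁻¹²)`. So there are positive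
critical values arbitrarily close to `0`, and a finite set of positive reals cannot do that.
-/

open Filter Topology Real Set Asymptotics

theorem Set.infinite_of_forall_exists_pos_lt {S : Set ℝ}
    (h : ∀ ε > 0, ∃ v ∈ S, 0 < v ∧ v < ε) : S.Infinite := by
  have h0 : (0 : ℝ) ∈ closure (S ∩ Ioi 0) := Metric.mem_closure_iff.2 fun ε hε => by
    obtain ⟨v, hvS, hv0, hvε⟩ := h ε hε
    exact ⟨v, ⟨hvS, hv0⟩, by rwa [dist_comm, Real.dist_0_eq_abs, abs_of_pos hv0]⟩
  intro hS
  exact (lt_irrefl 0 : ¬(0 : ℝ) < 0) ((hS.subset inter_subset_left).isClosed.closure_subset h0).2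

theorem exists_mem_Ioo_deriv_eq_zero_le {g : ℝ → ℝ} {a b x : ℝ} (hg : ContinuousOn g (Icc a b))
    (hx : x ∈ Icc a b) (ha : g a < g x) (hb : g b < g x) :
    ∃ c ∈ Ioo a b, deriv g c = 0 ∧ g x ≤ g c := by
  obtain ⟨c, hc, hmax⟩ := isCompact_Icc.exists_isMaxOn ⟨x, hx⟩ hg
  have hxc : g x ≤ g c := hmax hx
  have hca : a < c := hc.1.lt_of_ne fun h => by subst h; linarith
  have hcb : c < b := hc.2.lt_of_ne fun h => by subst h; linarith
  exact ⟨c, ⟨hca, hcb⟩, (hmax.isLocalMax (Icc_mem_nhds hca hcb)).deriv_eq_zero, hxc⟩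

noncomputable def sqMulSinInv (x : ℝ) : ℝ := x ^ 2 * sin x⁻¹

theorem sqMulSinInv_inv (x : ℝ) : sqMulSinInv x⁻¹ = (x⁻¹) ^ 2 * sin x := by
  rw [sqMulSinInv, inv_inv]

theorem sqMulSinInv_le_sq (x : ℝ) : sqMulSinInv x ≤ x ^ 2 :=
  mul_le_of_le_one_right (sq_nonneg x) (sin_le_one _)

theorem hasDerivAt_sqMulSinInv_zero : HasDerivAt sqMulSinInv 0 0 := by
  rw [hasDerivAt_iff_isLittleO]
  have hbound : sqMulSinInv =O[𝓝 0] fun x : ℝ => x ^ 2 :=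
    IsBigO.of_bound 1 <| Eventually.of_forall fun x => by
      rw [sqMulSinInv, norm_mul, one_mul]
      exact mul_le_of_le_one_right (norm_nonneg _) (abs_sin_le_one _)
  simpa [show sqMulSinInv 0 = 0 by simp [sqMulSinInv]] using hbound.trans_isLittleO (isLittleO_pow_id one_lt_two)

theorem differentiable_sqMulSinInv : Differentiable ℝ sqMulSinInv := by
  intro x
  rcases eq_or_ne x 0 with rfl | hx
  · exact hasDerivAt_sqMulSinInv_zero.differentiableAt
  · unfold sqMulSinInv
    fun_prop (disch := exact hx)

theorem exists_deriv_sqMulSinInv_eq_zero_pos {δ : ℝ} (hδ : 0 < δ) :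
    ∃ c ∈ Ioo 0 δ, deriv sqMulSinInv c = 0 ∧ 0 < sqMulSinInv c := by
  obtain ⟨n, hn⟩ := exists_nat_gt δ⁻¹
  have hn0 : (0 : ℝ) < n := (inv_pos.2 hδ).trans hn
  have hzero : ∀ m : ℕ, sqMulSinInv (m * π)⁻¹ = 0 := fun m => by
    rw [sqMulSinInv_inv, sin_nat_mul_pi, mul_zero]
  have hpeak : sqMulSinInv (2 * n * π + π / 2)⁻¹ = ((2 * n * π + π / 2)⁻¹) ^ 2 := by
    rw [sqMulSinInv_inv, show 2 * n * π = n * (2 * π) by ring, sin_add_pi_div_two,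
      cos_nat_mul_two_pi, mul_one]
  have hpeak_pos : 0 < sqMulSinInv (2 * n * π + π / 2)⁻¹ := by rw [hpeak]; positivity
  have hpeak_mem : (2 * n * π + π / 2)⁻¹ ∈ Icc ((2 * n + 1 : ℕ) * π)⁻¹ ((2 * n : ℕ) * π)⁻¹ := by
    push_cast
    constructor <;> apply inv_anti₀ <;> nlinarith [pi_pos]
  obtain ⟨c, hc, hcrit, hle⟩ := exists_mem_Ioo_deriv_eq_zero_le
    differentiable_sqMulSinInv.continuous.continuousOn hpeak_mem
    (by rwa [hzero]) (by rwa [hzero])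
  have hc0 : 0 < c := lt_trans (by positivity) hc.1
  have hcδ : c < δ := calc
    c < ((2 * n : ℕ) * π)⁻¹ := hc.2
    _ < δ := by
      push_cast
      rw [inv_lt_comm₀ (by positivity) hδ]
      nlinarith [pi_gt_three]
  exact ⟨c, ⟨hc0, hcδ⟩, hcrit, hpeak_pos.trans_le hle⟩

/-- for `f(x) = x²·sin(1/x)` (`x ≠ 0`), `f(0) = 0`, the function `f` is
differentiable everywhere and the set of its critical values, `f '' {x | f'(x) = 0}`,
is infinite. -/
theorem statement15 (f : ℝ → ℝ)
    (hf : ∀ x : ℝ, f x = if x = 0 then 0 else x ^ 2 * Real.sin (1 / x)) :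
    Differentiable ℝ f ∧ (f '' {x : ℝ | deriv f x = 0}).Infinite := by
  obtain rfl : f = sqMulSinInv := funext fun x => by
    rw [hf, sqMulSinInv, one_div]
    split_ifs with hx <;> simp [hx]
  refine ⟨differentiable_sqMulSinInv, Set.infinite_of_forall_exists_pos_lt fun ε hε => ?_⟩
  obtain ⟨c, hc, hcrit, hpos⟩ := exists_deriv_sqMulSinInv_eq_zero_pos (sqrt_pos.2 hε)
  have hcε : c ^ 2 < ε := (lt_sqrt hc.1.le).1 hc.2
  exact ⟨sqMulSinInv c, ⟨c, hcrit, rfl⟩, hpos, (sqMulSinInv_le_sq c).trans_lt hcε⟩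
end

section
/- Let f : ℝⁿ → ℝ be continuously differentiable, let ρ > 0, and let ψ be a real function that is differentiable at every point of (0, ρ). Assume the Kurdyka–Łojasiewicz inequality: ψ'(f(y))·‖∇f(y)‖ ≥ 1 for every y ∈ ℝⁿ with 0 < f(y) < ρ. Let T > 0 and let x : [0, T] → ℝⁿ be differentiable with x'(t) = −∇f(x(t)) for all t ∈ [0, T], and suppose 0 < f(x(t)) < ρ for all t ∈ [0, T]. Then the length of the trajectory is bounded: ∫₀ᵀ ‖x'(t)‖ dt ≤ ψ(f(x(0))) − ψ(f(x(T))). -/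
/-! Along the flow, `t ↦ ψ (f (x t))` has derivative `-ψ'(f x) ‖∇f x‖²`, and the
Kurdyka–Łojasiewicz inequality bounds this from above by `-‖∇f x‖ = -‖x'‖`. Integrating this
speed bound over `[0, T]` bounds the length by the total decrease of `ψ ∘ f ∘ x`. -/

section GradientFlow

variable {F : Type*} [NormedAddCommGroup F] [InnerProductSpace ℝ F] [CompleteSpace F]

theorem ContDiff.continuous_gradient {f : F → ℝ} {n : WithTop ℕ∞} (hf : ContDiff ℝ n f)
    (hn : n ≠ 0) : Continuous (gradient f) :=
   (InnerProductSpace.toDual ℝ F).symm.continuous.comp (hf.continuous_fderiv hn)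

theorem DifferentiableAt.hasDerivAt_comp_of_hasDerivAt_neg_gradient {f : F → ℝ} {x : ℝ → F}
    {t : ℝ} (hf : DifferentiableAt ℝ f (x t)) (hx : HasDerivAt x (-gradient f (x t)) t) :
    HasDerivAt (fun s => f (x s)) (-‖gradient f (x t)‖ ^ 2) t := by
  have := hf.hasFDerivAt.comp_hasDerivAt t hx
  rwa [← inner_gradient_left, inner_neg_right, real_inner_self_eq_norm_sq] at this

end GradientFlow

theorem statement16_general {n : ℕ} (f : EuclideanSpace ℝ (Fin n) → ℝ) (hf : ContDiff ℝ 1 f)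
    (ρ : ℝ) (ψ ψ' : ℝ → ℝ)
    (hψ : ∀ s ∈ Set.Ioo (0 : ℝ) ρ, HasDerivAt ψ (ψ' s) s)
    (hKL : ∀ y : EuclideanSpace ℝ (Fin n), f y ∈ Set.Ioo (0 : ℝ) ρ →
      1 ≤ ψ' (f y) * ‖gradient f y‖)
    (T : ℝ) (hT : 0 < T)
    (x x' : ℝ → EuclideanSpace ℝ (Fin n))
    (hx : ∀ t ∈ Set.Icc (0 : ℝ) T, HasDerivAt x (x' t) t)
    (hgrad : ∀ t ∈ Set.Icc (0 : ℝ) T, x' t = -gradient f (x t))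
    (hrange : ∀ t ∈ Set.Icc (0 : ℝ) T, f (x t) ∈ Set.Ioo (0 : ℝ) ρ) :
    ∫ t in (0 : ℝ)..T, ‖x' t‖ ≤ ψ (f (x 0)) - ψ (f (x T)) := by
  have hdecay : ∀ t ∈ Set.Icc 0 T, HasDerivAt (fun s => -ψ (f (x s)))
      (ψ' (f (x t)) * ‖gradient f (x t)‖ ^ 2) t := fun t ht => by
    have hfx := (hf.differentiable one_ne_zero (x t)).hasDerivAt_comp_of_hasDerivAt_neg_gradient
      (hgrad t ht ▸ hx t ht)
    exact ((hψ _ (hrange t ht)).comp t hfx).neg.congr_deriv (by ring)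
  have hspeed : ∀ t ∈ Set.Icc 0 T, ‖x' t‖ ≤ ψ' (f (x t)) * ‖gradient f (x t)‖ ^ 2 :=
    fun t ht => by
      rw [hgrad t ht, norm_neg]
      nlinarith [hKL (x t) (hrange t ht), norm_nonneg (gradient f (x t))]
  have hspeed_cont : ContinuousOn (fun t => ‖x' t‖) (Set.Icc 0 T) := by
    refine ContinuousOn.congr (f := fun t => ‖gradient f (x t)‖) ?_ fun t ht => by
      simp [hgrad t ht]
    exact ((hf.continuous_gradient one_ne_zero).comp_continuousOn
      fun t ht => (hx t ht).continuousAt.continuousWithinAt).norm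
  have hFTC := intervalIntegral.integral_le_sub_of_hasDeriv_right_of_le hT.le
    (fun t ht => (hdecay t ht).continuousAt.continuousWithinAt)
    (fun t ht => (hdecay t (Set.Ioo_subset_Icc_self ht)).hasDerivWithinAt)
    hspeed_cont.integrableOn_Icc fun t ht => hspeed t (Set.Ioo_subset_Icc_self ht)
  linarith

/-- let `f : ℝⁿ → ℝ` be `C¹`, `ρ > 0`, and `ψ` differentiable on `(0, ρ)`
with derivative `ψ'` there, satisfying the Kurdyka–Łojasiewicz inequality
`ψ'(f y)·‖∇f(y)‖ ≥ 1` whenever `0 < f y < ρ`.  If `x : [0, T] → ℝⁿ` is a trajectory of the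
gradient system `x'(t) = -∇f(x(t))` with `0 < f(x(t)) < ρ` on `[0, T]`, then its length is
bounded: `∫₀ᵀ ‖x'(t)‖ dt ≤ ψ(f(x(0))) - ψ(f(x(T)))`. -/
theorem statement16 {n : ℕ} (f : EuclideanSpace ℝ (Fin n) → ℝ) (hf : ContDiff ℝ 1 f)
    (ρ : ℝ) (hρ : 0 < ρ) (ψ ψ' : ℝ → ℝ)
    (hψ : ∀ s ∈ Set.Ioo (0 : ℝ) ρ, HasDerivAt ψ (ψ' s) s)
    (hKL : ∀ y : EuclideanSpace ℝ (Fin n), f y ∈ Set.Ioo (0 : ℝ) ρ →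
      1 ≤ ψ' (f y) * ‖gradient f y‖)
    (T : ℝ) (hT : 0 < T)
    (x x' : ℝ → EuclideanSpace ℝ (Fin n))
    (hx : ∀ t ∈ Set.Icc (0 : ℝ) T, HasDerivAt x (x' t) t)
    (hgrad : ∀ t ∈ Set.Icc (0 : ℝ) T, x' t = -gradient f (x t))
    (hrange : ∀ t ∈ Set.Icc (0 : ℝ) T, f (x t) ∈ Set.Ioo (0 : ℝ) ρ) :
    ∫ t in (0 : ℝ)..T, ‖x' t‖ ≤ ψ (f (x 0)) - ψ (f (x T)) :=
  statement16_general f hf ρ ψ ψ' hψ hKL T hT x x' hx hgrad hrange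
end
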